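/- Let p be a C² 2π-periodic support function with p+p''>0, constant width, and Steiner point at the origin. Then π|F_e| − Δ ≥ 20π δ₂² and moreover |F_e| ≥ 36 δ₂², where δ₂² = π Σ_{n≥2} cₙ². Equality holds iff cₙ = 0 for n ≥ 5 (equivalently for n ≥ 4 together with n even forced to vanish). -/

import Mathlib

/-!
Write `cₙ² = aₙ² + bₙ²` for the Fourier amplitudes of `p`. Parseval's identity for `p`, `p'`, `p''`
turns `∫ p²`, `∫ p'²`, `∫ p''²` into `∑ cₙ²`, `∑ n² cₙ²`, `∑ n⁴ cₙ²` (over `n ≥ 1`, up to the mean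
of `p`), and then `π |F_e| - Δ - 20 π δ₂²` and `|F_e| - 36 δ₂²` become
`(π² / 2) ∑ (n² - 9) (n² + 4) cₙ²` and `(π / 2) ∑ (n² - 9) (n² + 8) cₙ²`. The Steiner point
condition kills `c₁`, and constant width (`p - w / 2` is `π`-antiperiodic) kills every even `cₙ`
with `n ≠ 0`. Only odd `n ≥ 3` remain, where both weights are nonnegative and vanish only at
`n = 3`.
-/

open Real intervalIntegral MeasureTheory Set

noncomputable def fourierCosCoeff (f : ℝ → ℝ) (n : ℕ) : ℝ :=
  (1 / π) * ∫ x in (0:ℝ)..(2 * π), f x * cos (n * x)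

noncomputable def fourierSinCoeff (f : ℝ → ℝ) (n : ℕ) : ℝ :=
  (1 / π) * ∫ x in (0:ℝ)..(2 * π), f x * sin (n * x)

noncomputable def fourierAmplitudeSq (f : ℝ → ℝ) (n : ℕ) : ℝ :=
  fourierCosCoeff f n ^ 2 + fourierSinCoeff f n ^ 2

section Parseval

variable {f : ℝ → ℝ}

lemma fourierCoeffOn_ofReal (hf : Continuous f) (n : ℤ) :
    fourierCoeffOn two_pi_pos (fun x => (f x : ℂ)) n =
      (((∫ x in (0:ℝ)..(2 * π), f x * cos (n * x)) : ℝ) - Complex.I *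
        ((∫ x in (0:ℝ)..(2 * π), f x * sin (n * x) : ℝ) : ℂ)) / (2 * π) := by
  have hfourier : ∀ x : ℝ, fourier (-n) (x : AddCircle (2 * π - 0)) * (f x : ℂ) =
      ((f x * cos (n * x) : ℝ) : ℂ) - Complex.I * ((f x * sin (n * x) : ℝ) : ℂ) := by
    intro x
    rw [fourier_coe_apply, show 2 * (π : ℂ) * Complex.I * ((-n : ℤ) : ℂ) * x / ((2 * π - 0 : ℝ) : ℂ)
      = -((n * x : ℝ) : ℂ) * Complex.I by push_cast; field_simp; ring, Complex.exp_mul_I]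
    push_cast
    rw [Complex.cos_neg, Complex.sin_neg]
    ring
  have hcos : Continuous fun x => f x * cos (n * x) := by fun_prop
  have hsin : Continuous fun x => f x * sin (n * x) := by fun_prop
  rw [fourierCoeffOn_eq_integral]
  simp only [smul_eq_mul, hfourier]
  rw [intervalIntegral.integral_sub, intervalIntegral.integral_const_mul, integral_ofReal,
    integral_ofReal]
  · rw [Complex.real_smul]; push_cast; ring
  · exact (Complex.continuous_ofReal.comp hcos).intervalIntegrable _ _
  · exact (continuous_const.mul (Complex.continuous_ofReal.comp hsin)).intervalIntegrable _ _

lemma norm_sq_fourierCoeffOn_add_neg (hf : Continuous f) (n : ℕ) :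
    ‖fourierCoeffOn two_pi_pos (fun x => (f x : ℂ)) n‖ ^ 2 +
      ‖fourierCoeffOn two_pi_pos (fun x => (f x : ℂ)) (-n)‖ ^ 2 = fourierAmplitudeSq f n / 2 := by
  have hπ : π ≠ 0 := pi_ne_zero
  simp only [fourierCoeffOn_ofReal hf, fourierAmplitudeSq, fourierCosCoeff, fourierSinCoeff,
    Int.cast_neg, Int.cast_natCast, neg_mul, cos_neg, sin_neg, mul_neg,
    intervalIntegral.integral_neg, norm_div, div_pow, Complex.sq_norm, Complex.normSq_apply,
    Complex.sub_re, Complex.sub_im, Complex.mul_re, Complex.mul_im, Complex.ofReal_re,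
    Complex.ofReal_im, Complex.I_re, Complex.I_im, Complex.ofReal_neg, Complex.neg_re,
    Complex.neg_im, Complex.re_ofNat, Complex.im_ofNat]
  field_simp
  ring

theorem hasSum_fourierAmplitudeSq (hf : Continuous f) :
    HasSum (fun n : ℕ => fourierAmplitudeSq f (n + 1))
      ((1 / π) * (∫ x in (0:ℝ)..(2 * π), f x ^ 2) - fourierCosCoeff f 0 ^ 2 / 2) := by
  have hL2 : MemLp (fun x => (f x : ℂ)) 2 (volume.restrict (Ioc 0 (2 * π))) :=
    (memLp_two_iff_integrable_sq_norm
      (by fun_prop : Continuous fun x => (f x : ℂ)).aestronglyMeasurable).2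
      (by fun_prop : Continuous fun x => ‖(f x : ℂ)‖ ^ 2).integrableOn_Ioc
  have hpair := (hasSum_sq_fourierCoeffOn two_pi_pos hL2).nat_add_neg
  simp only [norm_sq_fourierCoeffOn_add_neg hf, Complex.norm_real, Real.norm_eq_abs, sq_abs,
    smul_eq_mul, sub_zero] at hpair
  have h0 := norm_sq_fourierCoeffOn_add_neg hf 0
  have hsin0 : fourierSinCoeff f 0 = 0 := by simp [fourierSinCoeff]
  simp only [Nat.cast_zero, neg_zero] at h0
  have hval : 2 * ((2 * π)⁻¹ * (∫ x in (0:ℝ)..(2 * π), f x ^ 2) +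
      ‖fourierCoeffOn two_pi_pos (fun x => (f x : ℂ)) 0‖ ^ 2 - fourierAmplitudeSq f 0 / 2) =
      (1 / π) * (∫ x in (0:ℝ)..(2 * π), f x ^ 2) - fourierCosCoeff f 0 ^ 2 / 2 := by
    simp only [fourierAmplitudeSq, hsin0] at h0 ⊢
    rw [show ‖fourierCoeffOn two_pi_pos (fun x => (f x : ℂ)) 0‖ ^ 2 =
      fourierCosCoeff f 0 ^ 2 / 4 by linarith]
    field_simp
    ring
  rw [← hval]
  simpa [mul_div_cancel₀] using ((hasSum_nat_add_iff' 1).2 hpair).mul_left 2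

end Parseval

section Derivative

variable {f f' : ℝ → ℝ}

lemma fourierCosCoeff_of_hasDerivAt (hf : ∀ x, HasDerivAt f (f' x) x) (hf' : Continuous f')
    (hper : f (2 * π) = f 0) (n : ℕ) :
    fourierCosCoeff f' n = n * fourierSinCoeff f n := by
  have hparts := integral_mul_deriv_eq_deriv_mul (a := 0) (b := 2 * π) (v := f)
    (fun x _ => ((hasDerivAt_id x).const_mul (n : ℝ)).cos) (fun x _ => hf x)
    (by apply Continuous.intervalIntegrable; fun_prop) (hf'.intervalIntegrable _ _)
  have hcos : cos (n * (2 * π)) = 1 := by exact_mod_cast cos_nat_mul_two_pi n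
  simp only [id, mul_zero, cos_zero, one_mul, hcos, hper, sub_self, zero_sub, mul_one, neg_mul,
    intervalIntegral.integral_neg, neg_neg, mul_right_comm (sin _) (n : ℝ), mul_comm (sin _) (f _),
    intervalIntegral.integral_mul_const] at hparts
  simp only [fourierCosCoeff, fourierSinCoeff, mul_comm (f' _), hparts, mul_comm (f _)]
  ring

lemma fourierSinCoeff_of_hasDerivAt (hf : ∀ x, HasDerivAt f (f' x) x) (hf' : Continuous f')
    (n : ℕ) : fourierSinCoeff f' n = -(n * fourierCosCoeff f n) := by
  have hparts := integral_mul_deriv_eq_deriv_mul (a := 0) (b := 2 * π) (v := f)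
    (fun x _ => ((hasDerivAt_id x).const_mul (n : ℝ)).sin) (fun x _ => hf x)
    (by apply Continuous.intervalIntegrable; fun_prop) (hf'.intervalIntegrable _ _)
  have hsin : sin (n * (2 * π)) = 0 := by
    simpa [mul_assoc, mul_left_comm] using sin_nat_mul_pi (2 * n)
  simp only [id, mul_zero, sin_zero, zero_mul, hsin, sub_self, zero_sub, mul_one,
    mul_right_comm (cos _) (n : ℝ), mul_comm (cos _) (f _), intervalIntegral.integral_mul_const]
    at hparts
  simp only [fourierCosCoeff, fourierSinCoeff, mul_comm (f' _), hparts, mul_comm (f _)]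
  ring

lemma fourierAmplitudeSq_of_hasDerivAt (hf : ∀ x, HasDerivAt f (f' x) x) (hf' : Continuous f')
    (hper : f (2 * π) = f 0) (n : ℕ) :
    fourierAmplitudeSq f' n = n ^ 2 * fourierAmplitudeSq f n := by
  simp only [fourierAmplitudeSq, fourierCosCoeff_of_hasDerivAt hf hf' hper,
    fourierSinCoeff_of_hasDerivAt hf hf']
  ring

end Derivative

lemma Function.Periodic.deriv {𝕜 F : Type*} [NontriviallyNormedField 𝕜] [NormedAddCommGroup F]
    [NormedSpace 𝕜 F] {f : 𝕜 → F} {c : 𝕜} (h : Function.Periodic f c) :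
    Function.Periodic (deriv f) c := fun x => by
  rw [← deriv_comp_add_const, h.funext]

theorem ContDiff.hasSum_sq_mul_fourierAmplitudeSq {f : ℝ → ℝ} (hf : ContDiff ℝ 1 f)
    (hper : Function.Periodic f (2 * π)) :
    HasSum (fun n : ℕ => ((n : ℝ) + 1) ^ 2 * fourierAmplitudeSq f (n + 1))
      ((1 / π) * ∫ x in (0:ℝ)..(2 * π), deriv f x ^ 2) := by
  have hd : ∀ x, HasDerivAt f (deriv f x) x := fun x => (hf.differentiable one_ne_zero x).hasDerivAt
  have hc := hf.continuous_deriv le_rfl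
  have hper0 : f (2 * π) = f 0 := by simpa using hper 0
  simpa [fourierAmplitudeSq_of_hasDerivAt hd hc hper0, fourierCosCoeff_of_hasDerivAt hd hc hper0]
    using hasSum_fourierAmplitudeSq hc

theorem ContDiff.hasSum_pow_four_mul_fourierAmplitudeSq {f : ℝ → ℝ} (hf : ContDiff ℝ 2 f)
    (hper : Function.Periodic f (2 * π)) :
    HasSum (fun n : ℕ => ((n : ℝ) + 1) ^ 4 * fourierAmplitudeSq f (n + 1))
      ((1 / π) * ∫ x in (0:ℝ)..(2 * π), deriv (deriv f) x ^ 2) := by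
  have hf' : ContDiff ℝ 1 (deriv f) := (contDiff_succ_iff_deriv.1 hf).2.2
  have h := hf'.hasSum_sq_mul_fourierAmplitudeSq hper.deriv
  simp only [fourierAmplitudeSq_of_hasDerivAt
    (fun x => (hf.differentiable two_ne_zero x).hasDerivAt) hf'.continuous (by simpa using hper 0),
    Nat.cast_add, Nat.cast_one, ← mul_assoc, ← pow_add] at h
  exact h

section ConstantWidth

lemma integral_cos_nat_mul {n : ℕ} (hn : n ≠ 0) : ∫ x in (0:ℝ)..(2 * π), cos (n * x) = 0 := by
  have hsin : sin (n * (2 * π)) = 0 := by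
    simpa [mul_assoc, mul_left_comm] using sin_nat_mul_pi (2 * n)
  simp [intervalIntegral.integral_comp_mul_left (fun x => cos x) (Nat.cast_ne_zero.2 hn), hsin]

lemma integral_sin_nat_mul {n : ℕ} (hn : n ≠ 0) : ∫ x in (0:ℝ)..(2 * π), sin (n * x) = 0 := by
  simp [intervalIntegral.integral_comp_mul_left (fun x => sin x) (Nat.cast_ne_zero.2 hn),
    cos_nat_mul_two_pi]

variable {p : ℝ → ℝ} {w : ℝ}

lemma integral_mul_eq_zero_of_add_pi {t : ℝ → ℝ} (hp : Continuous p) (ht : Continuous t)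
    (hw : ∀ x, p x + p (x + π) = w) (htπ : Function.Periodic t π)
    (hint : ∫ x in (0:ℝ)..(2 * π), t x = 0) :
    ∫ x in (0:ℝ)..(2 * π), p x * t x = 0 := by
  have hper : Function.Periodic (fun x => p x * t x) (2 * π) := by
    intro x
    have hp2 : p (x + 2 * π) = p x := by
      have h := hw (x + π)
      rw [add_assoc, ← two_mul] at h
      linarith [hw x]
    show p (x + 2 * π) * t (x + 2 * π) = p x * t x
    rw [hp2, two_mul, ← add_assoc, htπ, htπ]
  have hshift : ∫ x in (0:ℝ)..(2 * π), p (x + π) * t x = ∫ x in (0:ℝ)..(2 * π), p x * t x := by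
    rw [intervalIntegral.integral_congr (g := fun x => p (x + π) * t (x + π)) fun x _ => by
      simp only [htπ x]]
    rw [intervalIntegral.integral_comp_add_right (fun x => p x * t x), zero_add,
      add_comm _ π, hper.intervalIntegral_add_eq π 0, zero_add]
  have hsum : ∫ x in (0:ℝ)..(2 * π), (p x + p (x + π)) * t x = 0 := by
    simp [hw, intervalIntegral.integral_const_mul, hint]
  simp only [add_mul] at hsum
  rw [intervalIntegral.integral_add, hshift] at hsum
  · linarith
  all_goals exact Continuous.intervalIntegrable (by fun_prop) _ _

lemma fourierAmplitudeSq_eq_zero_of_add_pi (hp : Continuous p) (hw : ∀ x, p x + p (x + π) = w)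
    {n : ℕ} (hn : Even n) (hn0 : n ≠ 0) : fourierAmplitudeSq p n = 0 := by
  obtain ⟨k, rfl⟩ := hn
  have hshift : ∀ x : ℝ, ((k + k : ℕ) : ℝ) * (x + π) = (k + k : ℕ) * x + k * (2 * π) := by
    intro x; push_cast; ring
  have hcos := integral_mul_eq_zero_of_add_pi hp (by fun_prop) hw
    (fun x => by simp only [hshift, cos_add_nat_mul_two_pi]) (integral_cos_nat_mul hn0)
  have hsin := integral_mul_eq_zero_of_add_pi hp (by fun_prop) hw
    (fun x => by simp only [hshift, sin_add_nat_mul_two_pi]) (integral_sin_nat_mul hn0)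
  simp only [fourierAmplitudeSq, fourierCosCoeff, fourierSinCoeff, hcos, hsin]
  ring

end ConstantWidth

lemma hasSum_weighted_nonneg_and_eq_zero_iff {A : ℕ → ℝ} {c S : ℝ} (hA : ∀ n, 0 ≤ A n)
    (hA1 : A 1 = 0) (hA2 : A 2 = 0) (hA4 : A 4 = 0) (hc : 0 < c)
    (hS : HasSum (fun n : ℕ => (((n : ℝ) + 1) ^ 2 - 9) * (((n : ℝ) + 1) ^ 2 + c) * A (n + 1)) S) :
    0 ≤ S ∧ (S = 0 ↔ ∀ n, 5 ≤ n → A n = 0) := by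
  set g := fun n : ℕ => (((n : ℝ) + 1) ^ 2 - 9) * (((n : ℝ) + 1) ^ 2 + c) * A (n + 1)
  have hg : ∀ n, 0 ≤ g n := by
    rintro (_ | _ | n)
    · simp [g, hA1]
    · simp [g, hA2]
    · refine mul_nonneg (mul_nonneg ?_ (by positivity)) (hA _)
      push_cast
      nlinarith [(n.cast_nonneg : (0 : ℝ) ≤ n)]
  have hS0 : S = 0 ↔ g = 0 :=
    ⟨fun h => (hasSum_zero_iff_of_nonneg hg).1 (h ▸ hS), fun h => hS.unique (h ▸ hasSum_zero)⟩
  refine ⟨hS.nonneg hg, hS0.trans ⟨fun h n hn => ?_, fun h => ?_⟩⟩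
  · obtain ⟨m, rfl⟩ : ∃ m, n = m + 1 := ⟨n - 1, by omega⟩
    have hm : (4 : ℝ) ≤ m := by exact_mod_cast (by omega : 4 ≤ m)
    have hweight : 0 < (((m : ℝ) + 1) ^ 2 - 9) * (((m : ℝ) + 1) ^ 2 + c) :=
      mul_pos (by nlinarith) (by positivity)
    exact (mul_eq_zero.1 (congrFun h m)).resolve_left hweight.ne'
  · funext n
    rcases n with _ | _ | _ | _ | n
    · simp [g, hA1]
    · simp [g, hA2]
    · norm_num [g]
    · simp [g, hA4]
    · simp [g, h (n + 5) (by omega)]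

lemma pi_mul_tsum_fourierAmplitudeSq_add_two {f : ℝ → ℝ} (hf : Continuous f)
    (hA1 : fourierAmplitudeSq f 1 = 0) :
    π * ∑' n : ℕ, fourierAmplitudeSq f (n + 2) =
      (∫ x in (0:ℝ)..(2 * π), f x ^ 2) - (∫ x in (0:ℝ)..(2 * π), f x) ^ 2 / (2 * π) := by
  have htail := (hasSum_nat_add_iff' 1).2 (hasSum_fourierAmplitudeSq hf)
  simp only [Finset.sum_range_one, zero_add, hA1, sub_zero] at htail
  rw [htail.tsum_eq]
  simp only [fourierCosCoeff, Nat.cast_zero, zero_mul, cos_zero, mul_one]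
  field_simp

theorem constantWidth_wirtinger {p : ℝ → ℝ} {w c : ℝ} (hp : ContDiff ℝ 2 p)
    (hper : Function.Periodic p (2 * π)) (hw : ∀ x, p x + p (x + π) = w)
    (hA1 : fourierAmplitudeSq p 1 = 0) (hc : 0 < c) :
    0 ≤ (∫ x in (0:ℝ)..(2 * π), deriv (deriv p) x ^ 2) +
        (c - 9) * (∫ x in (0:ℝ)..(2 * π), deriv p x ^ 2) -
        9 * c * ((∫ x in (0:ℝ)..(2 * π), p x ^ 2) - (∫ x in (0:ℝ)..(2 * π), p x) ^ 2 / (2 * π)) ∧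
      ((∫ x in (0:ℝ)..(2 * π), deriv (deriv p) x ^ 2) +
        (c - 9) * (∫ x in (0:ℝ)..(2 * π), deriv p x ^ 2) -
        9 * c * ((∫ x in (0:ℝ)..(2 * π), p x ^ 2) - (∫ x in (0:ℝ)..(2 * π), p x) ^ 2 / (2 * π)) =
          0 ↔ ∀ n, 5 ≤ n → fourierAmplitudeSq p n = 0) := by
  have H0 := hasSum_fourierAmplitudeSq hp.continuous
  have H1 := (hp.of_le one_le_two).hasSum_sq_mul_fourierAmplitudeSq hper
  have H2 := hp.hasSum_pow_four_mul_fourierAmplitudeSq hper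
  have hS := (H2.add (H1.mul_left (c - 9))).sub (H0.mul_left (9 * c))
  have hAeven {n : ℕ} (hn : Even n) (hn0 : n ≠ 0) : fourierAmplitudeSq p n = 0 :=
    fourierAmplitudeSq_eq_zero_of_add_pi hp.continuous hw hn hn0
  obtain ⟨hnonneg, hzero⟩ := hasSum_weighted_nonneg_and_eq_zero_iff (A := fourierAmplitudeSq p)
    (fun n => add_nonneg (sq_nonneg _) (sq_nonneg _)) hA1 (hAeven (by decide) two_ne_zero)
    (hAeven (by decide) four_ne_zero) hc
    ((congrArg (HasSum · _) (funext fun n => by ring)).mpr hS)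
  have hscale : (∫ x in (0:ℝ)..(2 * π), deriv (deriv p) x ^ 2) +
        (c - 9) * (∫ x in (0:ℝ)..(2 * π), deriv p x ^ 2) -
        9 * c * ((∫ x in (0:ℝ)..(2 * π), p x ^ 2) - (∫ x in (0:ℝ)..(2 * π), p x) ^ 2 / (2 * π)) =
      π * ((1 / π * ∫ x in (0:ℝ)..(2 * π), deriv (deriv p) x ^ 2) +
        (c - 9) * (1 / π * ∫ x in (0:ℝ)..(2 * π), deriv p x ^ 2) -
        9 * c * ((1 / π * ∫ x in (0:ℝ)..(2 * π), p x ^ 2) - fourierCosCoeff p 0 ^ 2 / 2)) := by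
    simp only [fourierCosCoeff, Nat.cast_zero, zero_mul, cos_zero, mul_one]
    field_simp
  rw [hscale]
  exact ⟨mul_nonneg pi_pos.le hnonneg, (mul_eq_zero_iff_left pi_ne_zero).trans hzero⟩

theorem stmt_12_general (p : ℝ → ℝ) (hp : ContDiff ℝ 2 p)
    (hper : ∀ x, p (x + 2 * π) = p x)
    (hwidth : ∀ x y, p x + p (x + π) = p y + p (y + π))
    (a b : ℕ → ℝ)
    (ha : ∀ n, a n = (1 / π) * ∫ x in (0:ℝ)..(2 * π), p x * Real.cos (n * x))
    (hb : ∀ n, b n = (1 / π) * ∫ x in (0:ℝ)..(2 * π), p x * Real.sin (n * x))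
    (hsteiner : a 1 = 0 ∧ b 1 = 0)
    (L F Fe Δ δ₂sq : ℝ)
    (hL : L = ∫ x in (0:ℝ)..(2 * π), p x)
    (hF : F = (1 / 2) * ∫ x in (0:ℝ)..(2 * π), (p x) ^ 2 - (deriv p x) ^ 2)
    (hFe : Fe = (1 / 2) * ∫ x in (0:ℝ)..(2 * π),
      (deriv (deriv p) x) ^ 2 - (deriv p x) ^ 2)
    (hΔ : Δ = L ^ 2 - 4 * π * F)
    (hδ : δ₂sq = π * ∑' k : ℕ, (a (k + 2) ^ 2 + b (k + 2) ^ 2)) :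
    π * Fe - Δ ≥ 20 * π * δ₂sq ∧
    Fe ≥ 36 * δ₂sq ∧
    ((π * Fe - Δ = 20 * π * δ₂sq ∧ Fe = 36 * δ₂sq) ↔
      ∀ n, 5 ≤ n → a n ^ 2 + b n ^ 2 = 0) := by
  obtain rfl : a = fourierCosCoeff p := funext ha
  obtain rfl : b = fourierSinCoeff p := funext hb
  have hA1 : fourierAmplitudeSq p 1 = 0 := by simp [fourierAmplitudeSq, hsteiner.1, hsteiner.2]
  obtain ⟨hpos4, hzero4⟩ :=
    constantWidth_wirtinger (c := 4) hp hper (fun x => hwidth x 0) hA1 (by norm_num)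
  obtain ⟨hpos8, hzero8⟩ :=
    constantWidth_wirtinger (c := 8) hp hper (fun x => hwidth x 0) hA1 (by norm_num)
  have hδ' : δ₂sq = (∫ x in (0:ℝ)..(2 * π), p x ^ 2) - L ^ 2 / (2 * π) := by
    rw [hδ, hL]; exact pi_mul_tsum_fourierAmplitudeSq_add_two hp.continuous hA1
  have hsq {f : ℝ → ℝ} (hf : Continuous f) :
      IntervalIntegrable (fun x => f x ^ 2) volume 0 (2 * π) := (hf.pow 2).intervalIntegrable _ _
  have hc1 := hp.continuous_deriv one_le_two
  have hc2 := (contDiff_succ_iff_deriv.1 hp).2.2.continuous_deriv le_rfl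
  rw [intervalIntegral.integral_sub (hsq hp.continuous) (hsq hc1)] at hF
  rw [intervalIntegral.integral_sub (hsq hc2) (hsq hc1)] at hFe
  rw [← hL] at hpos4 hzero4 hpos8 hzero8
  set I₀ := ∫ x in (0:ℝ)..(2 * π), p x ^ 2
  set I₁ := ∫ x in (0:ℝ)..(2 * π), deriv p x ^ 2
  set I₂ := ∫ x in (0:ℝ)..(2 * π), deriv (deriv p) x ^ 2
  have key4 : π * Fe - Δ - 20 * π * δ₂sq =
      π / 2 * (I₂ + (4 - 9) * I₁ - 9 * 4 * (I₀ - L ^ 2 / (2 * π))) := by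
    rw [hFe, hΔ, hF, hδ']; field_simp; ring
  have key8 : Fe - 36 * δ₂sq = 1 / 2 * (I₂ + (8 - 9) * I₁ - 9 * 8 * (I₀ - L ^ 2 / (2 * π))) := by
    rw [hFe, hδ']; field_simp; ring
  refine ⟨by nlinarith [pi_pos], by linarith, ?_⟩
  rw [← sub_eq_zero, key4, ← sub_eq_zero (a := Fe), key8, mul_eq_zero_iff_left (by positivity),
    mul_eq_zero_iff_left (by norm_num), hzero4, hzero8, and_self]
  rfl

theorem stmt_12 (p : ℝ → ℝ) (hp : ContDiff ℝ 2 p)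
    (hper : ∀ x, p (x + 2 * π) = p x)
    (hconv : ∀ x, 0 < p x + deriv (deriv p) x)
    (hwidth : ∀ x y, p x + p (x + π) = p y + p (y + π))
    (a b : ℕ → ℝ)
    (ha : ∀ n, a n = (1 / π) * ∫ x in (0:ℝ)..(2 * π), p x * Real.cos (n * x))
    (hb : ∀ n, b n = (1 / π) * ∫ x in (0:ℝ)..(2 * π), p x * Real.sin (n * x))
    (hsteiner : a 1 = 0 ∧ b 1 = 0)
    (L F Fe Δ δ₂sq : ℝ)
    (hL : L = ∫ x in (0:ℝ)..(2 * π), p x)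
    (hF : F = (1 / 2) * ∫ x in (0:ℝ)..(2 * π), (p x) ^ 2 - (deriv p x) ^ 2)
    (hFe : Fe = (1 / 2) * ∫ x in (0:ℝ)..(2 * π),
      (deriv (deriv p) x) ^ 2 - (deriv p x) ^ 2)
    (hΔ : Δ = L ^ 2 - 4 * π * F)
    (hδ : δ₂sq = π * ∑' k : ℕ, (a (k + 2) ^ 2 + b (k + 2) ^ 2)) :
    π * Fe - Δ ≥ 20 * π * δ₂sq ∧
    Fe ≥ 36 * δ₂sq ∧
    ((π * Fe - Δ = 20 * π * δ₂sq ∧ Fe = 36 * δ₂sq) ↔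
      ∀ n, 5 ≤ n → a n ^ 2 + b n ^ 2 = 0) :=
  stmt_12_general p hp hper hwidth a b ha hb hsteiner L F Fe Δ δ₂sq hL hF hFe hΔ hδ
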